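/- Continuity of the analysis covariance map: if R > 0 and P, Q ≥ 0, then with c = |H|²|R^{-1}| and A(Q) = Q − Q H*(H Q H* + R)^{-1} H Q, one has |A(Q) − A(P)| ≤ |Q−P| (1 + c|Q| + c|P| + c²|P||Q|). -/

import Mathlib

open ContinuousLinearMap RealInnerProductSpace

variable {V W : Type*} [NormedAddCommGroup V] [InnerProductSpace ℝ V] [CompleteSpace V]
  [NormedAddCommGroup W] [InnerProductSpace ℝ W] [CompleteSpace W]

noncomputable def analysisCov (H : V →L[ℝ] W) (R : W →L[ℝ] W) (Q : V →L[ℝ] V) : V →L[ℝ] V :=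
  Q - (Q ∘L ContinuousLinearMap.adjoint H) ∘L
    Ring.inverse (H ∘L Q ∘L ContinuousLinearMap.adjoint H + R) ∘L (H ∘L Q)

/-! By the resolvent identity `S⁻¹ - T⁻¹ = S⁻¹ (T - S) T⁻¹` for the innovation covariances
`S = H Q H* + R` and `T = H P H* + R`, the difference `A(Q) - A(P)` splits into four terms, each
containing the factor `Q - P`, and submultiplicativity bounds them once `‖S⁻¹‖, ‖T⁻¹‖ ≤ ‖R⁻¹‖`.
That holds because `R ≤ S` in the Loewner order: for `v = S⁻¹ u`, Cauchy–Schwarz for the form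
`⟪R ·, ·⟫` gives `‖v‖² ≤ ‖R⁻¹‖ ⟪R v, v⟫ ≤ ‖R⁻¹‖ ⟪S v, v⟫ = ‖R⁻¹‖ ⟪u, v⟫ ≤ ‖R⁻¹‖ ‖u‖ ‖v‖`. -/

open scoped InnerProduct Ring

theorem norm_inverse_sub_inverse_le {A : Type*} [NormedRing A] {a b : A}
    (h : IsUnit a ↔ IsUnit b) : ‖a⁻¹ʳ - b⁻¹ʳ‖ ≤ ‖a⁻¹ʳ‖ * ‖b - a‖ * ‖b⁻¹ʳ‖ := by
  rw [Ring.inverse_sub_inverse h]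
  exact norm_mul₃_le

namespace ContinuousLinearMap

theorem opNorm_comp_le_of_le {𝕜 E F G : Type*} [NontriviallyNormedField 𝕜]
    [SeminormedAddCommGroup E] [SeminormedAddCommGroup F] [SeminormedAddCommGroup G]
    [NormedSpace 𝕜 E] [NormedSpace 𝕜 F] [NormedSpace 𝕜 G] {f : F →L[𝕜] G} {g : E →L[𝕜] F}
    {a b : ℝ} (hf : ‖f‖ ≤ a) (hg : ‖g‖ ≤ b) : ‖f ∘L g‖ ≤ a * b :=
  (opNorm_comp_le f g).trans (mul_le_mul hf hg (norm_nonneg _) ((norm_nonneg _).trans hf))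

section

variable {E : Type*} [NormedAddCommGroup E] [InnerProductSpace ℝ E]

theorem inner_apply_self_le_of_le {R S : E →L[ℝ] E} (h : R ≤ S) (u : E) :
    ⟪R u, u⟫ ≤ ⟪S u, u⟫ := by
  have := ((le_def R S).mp h).inner_nonneg_left u
  rwa [sub_apply, inner_sub_left, sub_nonneg] at this

theorem isUnit_of_coercive [CompleteSpace E] {S : E →L[ℝ] E} {α : ℝ} (hα : 0 < α)
    (hS : ∀ u, α * ‖u‖ ^ 2 ≤ ⟪S u, u⟫) : IsUnit S := by
  have hc : IsCoercive (innerSL ℝ ∘L S) := ⟨α, hα, fun u => by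
    rw [mul_assoc, ← sq]
    exact hS u⟩
  let e := hc.continuousLinearEquivOfBilin
  have he : ⇑e = ⇑S := funext fun u => ext_inner_right ℝ fun v =>
    hc.continuousLinearEquivOfBilin_apply u v
  exact S.isUnit_iff_bijective.mpr (he ▸ e.bijective)

theorem apply_ringInverse_apply {S : E →L[ℝ] E} (hS : IsUnit S) (u : E) : S (S⁻¹ʳ u) = u := by
  change (S * S⁻¹ʳ) u = u
  rw [Ring.mul_inverse_cancel S hS]
  rfl

theorem IsPositive.norm_sq_le_norm_inverse_mul_inner {R : E →L[ℝ] E} (hR : R.IsPositive)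
    (hRu : IsUnit R) (v : E) : ‖v‖ ^ 2 ≤ ‖R⁻¹ʳ‖ * ⟪R v, v⟫ := by
  set w := R⁻¹ʳ v
  have hRw : R w = v := apply_ringInverse_apply hRu v
  -- Cauchy–Schwarz for the semi-inner product `⟪R ·, ·⟫`.
  have hcs : ⟪R v, w⟫ * ⟪R w, v⟫ ≤ ⟪R v, v⟫ * ⟪R w, w⟫ :=
    LinearMap.BilinForm.apply_mul_apply_le_of_forall_zero_le ((innerₗ E) ∘ₗ (R : E →ₗ[ℝ] E))
      hR.inner_nonneg_left v w
  have hw : ⟪R w, w⟫ ≤ ‖R⁻¹ʳ‖ * ‖v‖ ^ 2 := by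
    calc ⟪R w, w⟫ ≤ ‖v‖ * ‖w‖ := hRw ▸ real_inner_le_norm v w
      _ ≤ ‖v‖ * (‖R⁻¹ʳ‖ * ‖v‖) := by gcongr; exact le_opNorm _ _
      _ = ‖R⁻¹ʳ‖ * ‖v‖ ^ 2 := by ring
  rcases (norm_nonneg v).eq_or_lt with hv | hv
  · rw [← hv, sq, zero_mul]
    exact mul_nonneg (norm_nonneg _) (hR.inner_nonneg_left v)
  · refine le_of_mul_le_mul_right ?_ (pow_pos hv 2)
    calc ‖v‖ ^ 2 * ‖v‖ ^ 2 = ⟪R v, w⟫ * ⟪R w, v⟫ := by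
          rw [hR.inner_left_eq_inner_right, hRw, real_inner_self_eq_norm_sq]
      _ ≤ ⟪R v, v⟫ * ⟪R w, w⟫ := hcs
      _ ≤ ⟪R v, v⟫ * (‖R⁻¹ʳ‖ * ‖v‖ ^ 2) := by gcongr; exact hR.inner_nonneg_left v
      _ = ‖R⁻¹ʳ‖ * ⟪R v, v⟫ * ‖v‖ ^ 2 := by ring

theorem IsPositive.norm_inverse_le_of_le {R S : E →L[ℝ] E} (hR : R.IsPositive)
    (hRu : IsUnit R) (hSu : IsUnit S) (hRS : R ≤ S) : ‖S⁻¹ʳ‖ ≤ ‖R⁻¹ʳ‖ := by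
  refine opNorm_le_bound _ (norm_nonneg _) fun u => ?_
  set v := S⁻¹ʳ u
  rcases (norm_nonneg v).eq_or_lt with hv | hv
  · rw [← hv]
    positivity
  · refine le_of_mul_le_mul_right ?_ hv
    calc ‖v‖ * ‖v‖ = ‖v‖ ^ 2 := (sq _).symm
      _ ≤ ‖R⁻¹ʳ‖ * ⟪R v, v⟫ := hR.norm_sq_le_norm_inverse_mul_inner hRu v
      _ ≤ ‖R⁻¹ʳ‖ * ⟪S v, v⟫ := by gcongr; exact inner_apply_self_le_of_le hRS v
      _ = ‖R⁻¹ʳ‖ * ⟪u, v⟫ := by rw [apply_ringInverse_apply hSu u]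
      _ ≤ ‖R⁻¹ʳ‖ * (‖u‖ * ‖v‖) := by gcongr; exact real_inner_le_norm u v
      _ = ‖R⁻¹ʳ‖ * ‖u‖ * ‖v‖ := by ring

end

end ContinuousLinearMap

noncomputable def innovationCov (H : V →L[ℝ] W) (R : W →L[ℝ] W) (Q : V →L[ℝ] V) : W →L[ℝ] W :=
  H ∘L Q ∘L H† + R

theorem analysisCov_eq (H : V →L[ℝ] W) (R : W →L[ℝ] W) (Q : V →L[ℝ] V) :
    analysisCov H R Q = Q - Q ∘L H† ∘L (innovationCov H R Q)⁻¹ʳ ∘L H ∘L Q := by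
  simp only [analysisCov, innovationCov, comp_assoc]

theorem analysisCov_sub_analysisCov (H : V →L[ℝ] W) (R : W →L[ℝ] W) (P Q : V →L[ℝ] V) :
    analysisCov H R Q - analysisCov H R P
      = (Q - P) - (Q - P) ∘L H† ∘L (innovationCov H R Q)⁻¹ʳ ∘L H ∘L Q
        - P ∘L H† ∘L ((innovationCov H R Q)⁻¹ʳ - (innovationCov H R P)⁻¹ʳ) ∘L H ∘L Q
        - P ∘L H† ∘L (innovationCov H R P)⁻¹ʳ ∘L H ∘L (Q - P) := by
  simp only [analysisCov_eq, sub_comp, comp_sub]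
  abel

theorem norm_analysisCov_sub_le {r : ℝ} (H : V →L[ℝ] W) (R : W →L[ℝ] W) (P Q : V →L[ℝ] V)
    (hunit : IsUnit (innovationCov H R Q) ↔ IsUnit (innovationCov H R P))
    (hQ : ‖(innovationCov H R Q)⁻¹ʳ‖ ≤ r) (hP : ‖(innovationCov H R P)⁻¹ʳ‖ ≤ r) :
    ‖analysisCov H R Q - analysisCov H R P‖
      ≤ ‖Q - P‖ * (1 + ‖H‖ ^ 2 * r * ‖Q‖ + ‖H‖ ^ 2 * r * ‖P‖
          + (‖H‖ ^ 2 * r) ^ 2 * ‖P‖ * ‖Q‖) := by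
  have hH : ‖H†‖ ≤ ‖H‖ := (adjoint.norm_map H).le
  have hdiff : innovationCov H R P - innovationCov H R Q = H ∘L (P - Q) ∘L H† := by
    simp only [innovationCov, comp_sub, sub_comp]
    abel
  have hinv : ‖(innovationCov H R Q)⁻¹ʳ - (innovationCov H R P)⁻¹ʳ‖
      ≤ r * (‖H‖ * (‖Q - P‖ * ‖H‖)) * r := by
    have hr : 0 ≤ r := (norm_nonneg _).trans hQ
    have hHPQ : ‖H ∘L (P - Q) ∘L H†‖ ≤ ‖H‖ * (‖Q - P‖ * ‖H‖) :=
      opNorm_comp_le_of_le le_rfl (opNorm_comp_le_of_le (norm_sub_rev P Q).le hH)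
    refine (norm_inverse_sub_inverse_le hunit).trans ?_
    rw [hdiff]
    exact mul_le_mul (mul_le_mul hQ hHPQ (norm_nonneg _) hr) hP (norm_nonneg _)
      (mul_nonneg hr (by positivity))
  have h₁ := opNorm_comp_le_of_le (le_refl ‖Q - P‖) (opNorm_comp_le_of_le hH
    (opNorm_comp_le_of_le hQ (opNorm_comp_le_of_le (le_refl ‖H‖) (le_refl ‖Q‖))))
  have h₂ := opNorm_comp_le_of_le (le_refl ‖P‖) (opNorm_comp_le_of_le hH
    (opNorm_comp_le_of_le hinv (opNorm_comp_le_of_le (le_refl ‖H‖) (le_refl ‖Q‖))))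
  have h₃ := opNorm_comp_le_of_le (le_refl ‖P‖) (opNorm_comp_le_of_le hH
    (opNorm_comp_le_of_le hP (opNorm_comp_le_of_le (le_refl ‖H‖) (le_refl ‖Q - P‖))))
  rw [analysisCov_sub_analysisCov]
  exact (norm_sub_le_of_le (norm_sub_le_of_le (norm_sub_le_of_le le_rfl h₁) h₂) h₃).trans_eq
    (by ring)

/-- Continuity of the analysis covariance map: if `R > 0` and `P, Q ≥ 0`, then with
`c = |H|²|R⁻¹|`, `|A(Q) − A(P)| ≤ |Q−P| (1 + c|Q| + c|P| + c²|P||Q|)`. -/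
theorem analysisCov_continuity
    (H : V →L[ℝ] W) (R : W →L[ℝ] W) (P Q : V →L[ℝ] V)
    (hP : P.IsPositive) (hQ : Q.IsPositive) (hRsym : IsSelfAdjoint R)
    (hRpos : ∃ α : ℝ, 0 < α ∧ ∀ u : W, α * ‖u‖ ^ 2 ≤ ⟪R u, u⟫) :
    ‖analysisCov H R Q - analysisCov H R P‖
      ≤ ‖Q - P‖ * (1 + (‖H‖ ^ 2 * ‖(Ring.inverse R : W →L[ℝ] W)‖) * ‖Q‖
          + (‖H‖ ^ 2 * ‖(Ring.inverse R : W →L[ℝ] W)‖) * ‖P‖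
          + (‖H‖ ^ 2 * ‖(Ring.inverse R : W →L[ℝ] W)‖) ^ 2 * ‖P‖ * ‖Q‖) := by
  obtain ⟨α, hα, hRcoer⟩ := hRpos
  have hR : R.IsPositive := (isPositive_iff' R).mpr
    ⟨hRsym, fun u => (by positivity : 0 ≤ α * ‖u‖ ^ 2).trans (hRcoer u)⟩
  have hle {T : V →L[ℝ] V} (hT : T.IsPositive) : R ≤ innovationCov H R T := by
    rw [le_def, innovationCov, add_sub_cancel_right]
    exact hT.conj_adjoint H
  have hunit {T : V →L[ℝ] V} (hT : T.IsPositive) : IsUnit (innovationCov H R T) :=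
    isUnit_of_coercive hα fun u => (hRcoer u).trans (inner_apply_self_le_of_le (hle hT) u)
  have hRu : IsUnit R := isUnit_of_coercive hα hRcoer
  exact norm_analysisCov_sub_le H R P Q (iff_of_true (hunit hQ) (hunit hP))
    (hR.norm_inverse_le_of_le hRu (hunit hQ) (hle hQ))
    (hR.norm_inverse_le_of_le hRu (hunit hP) (hle hP))
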